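/- If k is not of the form −1/2 − n for any nonnegative integer n, then the polynomial representation of the rational double affine Hecke algebra is irreducible: the only subspaces V ⊆ ℂ[x] invariant under multiplication by x, the reflection s, and the Dunkl operator D are {0} and ℂ[x]. -/
import Mathlib


open Polynomial

/-- The Dunkl operator on polynomials: D(p) = p' + k·(p(x) - p(-x))/x. -/
noncomputable def dunklP (k : ℂ) (p : Polynomial ℂ) : Polynomial ℂ :=
  derivative p + C k * divX (p - p.comp (-X))

lemma coeff_comp_neg_X (p : Polynomial ℂ) (n : ℕ) :
    (p.comp (-X)).coeff n = (-1)^n * p.coeff n := by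
  induction p using Polynomial.induction_on' with
  | add p q hp hq => simp [add_comp, hp, hq]; ring
  | monomial m a =>
      have hpow : ((-X : Polynomial ℂ))^m = C ((-1)^m) * X^m := by
        rw [show (-X : Polynomial ℂ) = C (-1) * X by simp, mul_pow, ← C_pow]
      rw [monomial_comp, hpow, ← mul_assoc, ← C_mul]
      simp only [coeff_C_mul, coeff_X_pow, coeff_monomial]
      split_ifs with h1 h2 h2
      · subst h1; ring
      · exact absurd h1.symm h2
      · exact absurd h2.symm h1
      · ring

lemma dunkl_coeff (k : ℂ) (p : Polynomial ℂ) (n : ℕ) :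
    (dunklP k p).coeff n = ((n+1 : ℂ) + k * (1 - (-1)^(n+1))) * p.coeff (n+1) := by
  simp [dunklP, coeff_derivative, coeff_divX, coeff_comp_neg_X]
  ring

lemma factor_ne (k : ℂ) (hk : ∀ n : ℕ, k ≠ -(1/2) - (n : ℂ)) (n : ℕ) :
    ((n+1 : ℂ) + k * (1 - (-1)^(n+1))) ≠ 0 := by
  intro h
  rcases Nat.even_or_odd n with he | ho
  · obtain ⟨m, hm⟩ := he
    apply hk m
    rw [Odd.neg_one_pow ⟨m, by omega⟩] at h
    have hn : (n:ℂ) = 2*m := by rw [hm]; push_cast; ring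
    rw [hn] at h
    linear_combination h/2
  · obtain ⟨m, hm⟩ := ho
    rw [Even.neg_one_pow ⟨m+1, by omega⟩] at h
    simp at h
    exact (Nat.cast_add_one_ne_zero n) h

theorem stmt11 (k : ℂ) (hk : ∀ n : ℕ, k ≠ -(1/2) - (n : ℂ))
    (V : Submodule ℂ (Polynomial ℂ))
    (hx : ∀ p ∈ V, X * p ∈ V)
    (hs : ∀ p ∈ V, p.comp (-X) ∈ V)
    (hD : ∀ p ∈ V, dunklP k p ∈ V) :
    V = ⊥ ∨ V = ⊤ := by
  by_cases hV : V = ⊥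
  · exact Or.inl hV
  right
  obtain ⟨p0, hp0V, hp00⟩ := Submodule.exists_mem_ne_zero_of_ne_bot hV
  have key : ∀ d : ℕ, ∀ p ∈ V, p ≠ 0 → p.natDegree ≤ d → (1 : Polynomial ℂ) ∈ V := by
    intro d
    induction d with
    | zero =>
        intro p hp hp0 hd
        obtain ⟨a, rfl⟩ : ∃ a, p = C a := ⟨p.coeff 0, eq_C_of_natDegree_le_zero hd⟩
        have ha0 : a ≠ 0 := fun h => hp0 (by rw [h, map_zero])
        have := V.smul_mem ((a⁻¹ : ℂ)) hp
        rwa [smul_C, smul_eq_mul, inv_mul_cancel₀ ha0, C_1] at this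
    | succ d ih =>
        intro p hp hp0 hd
        by_cases h : p.natDegree ≤ d
        · exact ih p hp hp0 h
        have hdeg : p.natDegree = d + 1 := le_antisymm hd (not_le.mp h)
        have hqV : dunklP k p ∈ V := hD p hp
        have hqc : (dunklP k p).coeff d ≠ 0 := by
          rw [dunkl_coeff]
          refine mul_ne_zero (factor_ne k hk d) ?_
          rw [← hdeg]
          exact mt leadingCoeff_eq_zero.mp hp0
        have hq0 : dunklP k p ≠ 0 := fun h0 => hqc (by rw [h0]; simp)
        have hqd : (dunklP k p).natDegree ≤ d := by
          rw [natDegree_le_iff_coeff_eq_zero]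
          intro m hm
          rw [dunkl_coeff, coeff_eq_zero_of_natDegree_lt (by omega), mul_zero]
        exact ih (dunklP k p) hqV hq0 hqd
  have h1 : (1 : Polynomial ℂ) ∈ V := key p0.natDegree p0 hp0V hp00 le_rfl
  have hXn : ∀ n : ℕ, (X : Polynomial ℂ)^n ∈ V := by
    intro n
    induction n with
    | zero => simpa using h1
    | succ n ih => rw [pow_succ, mul_comm]; exact hx _ ih
  have hall : ∀ p : Polynomial ℂ, p ∈ V := by
    intro p
    induction p using Polynomial.induction_on' with
    | add p q hp hq => exact V.add_mem hp hq
    | monomial n a =>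
        rw [← smul_X_eq_monomial]
        exact V.smul_mem a (hXn n)
  rw [eq_top_iff]
  exact fun p _ => hall p
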